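/- Starting from the degree initialization c_0(v) = deg(v) and iterating the H-index update c_{t+1}(v) = H({c_t(u) : u ∈ N(v)} ), every iterate pointwise dominates the coreness function: c_t(v) ≥ coreness(v) for all t and v. -/

import Mathlib

open scoped Classical
open Finset

noncomputable section

variable {V : Type*} [Fintype V]

/-- `S` induces a subgraph of `G` in which every vertex has degree at least `k`. -/
def IsCoreSet (G : SimpleGraph V) (k : ℕ) (S : Finset V) : Prop :=
  ∀ v ∈ S, k ≤ (S.filter (G.Adj v)).card

/-- The vertex set of the `k`-core of `G`: all vertices lying in some induced
subgraph of minimum degree at least `k`. -/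
def coreSet (G : SimpleGraph V) (k : ℕ) : Finset V :=
  Finset.univ.filter fun v => ∃ S : Finset V, IsCoreSet G k S ∧ v ∈ S

/-- The coreness of `v`: the largest `k` such that `v` belongs to the `k`-core. -/
def coreness (G : SimpleGraph V) (v : V) : ℕ :=
  Nat.findGreatest (fun k => v ∈ coreSet G k) (Fintype.card V)

/-- The H-index of a finite multiset `S` of naturals: the largest `h` such that
at least `h` elements of `S` are `≥ h`. -/
def hIndex (S : Multiset ℕ) : ℕ :=
  Nat.findGreatest (fun h => h ≤ (S.filter (fun x => h ≤ x)).card) (Multiset.card S)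

theorem mem_coreSet_iff {G : SimpleGraph V} {k : ℕ} {v : V} :
    v ∈ coreSet G k ↔ ∃ S : Finset V, IsCoreSet G k S ∧ v ∈ S := by
  simp only [coreSet, mem_filter, mem_univ, true_and]

theorem mem_coreSet_zero (G : SimpleGraph V) (v : V) : v ∈ coreSet G 0 :=
  mem_coreSet_iff.2 ⟨{v}, fun _ _ => Nat.zero_le _, mem_singleton_self v⟩

theorem exists_isCoreSet_coreness (G : SimpleGraph V) (v : V) :
    ∃ S : Finset V, IsCoreSet G (coreness G v) S ∧ v ∈ S :=
  mem_coreSet_iff.1 <|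
    Nat.findGreatest_spec (P := fun k => v ∈ coreSet G k) (Nat.zero_le _) (mem_coreSet_zero G v)

theorem filter_adj_subset_neighborFinset (G : SimpleGraph V) (S : Finset V) (v : V) :
    S.filter (G.Adj v) ⊆ G.neighborFinset v := fun u hu => by
  simpa only [SimpleGraph.mem_neighborFinset] using (mem_filter.1 hu).2

theorem IsCoreSet.le_degree {G : SimpleGraph V} {k : ℕ} {S : Finset V} (hS : IsCoreSet G k S)
    {v : V} (hv : v ∈ S) : k ≤ G.degree v :=
  (hS v hv).trans (card_le_card (filter_adj_subset_neighborFinset G S v))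

theorem le_hIndex_of_le {S T : Multiset ℕ} {k : ℕ} (hTS : T ≤ S) (hcard : k ≤ Multiset.card T)
    (hT : ∀ x ∈ T, k ≤ x) : k ≤ hIndex S := by
  have hfilter : k ≤ Multiset.card (S.filter (k ≤ ·)) :=
    hcard.trans (Multiset.card_le_card (Multiset.le_filter.2 ⟨hTS, hT⟩))
  exact Nat.le_findGreatest (hfilter.trans (Multiset.card_le_card (Multiset.filter_le _ _))) hfilter

theorem IsCoreSet.le_hIndex_map {G : SimpleGraph V} {k : ℕ} {S : Finset V} (hS : IsCoreSet G k S)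
    {f : V → ℕ} (hf : ∀ u ∈ S, k ≤ f u) {v : V} (hv : v ∈ S) :
    k ≤ hIndex ((G.neighborFinset v).val.map f) := by
  refine le_hIndex_of_le (T := (S.filter (G.Adj v)).val.map f)
    (Multiset.map_le_map (val_le_iff.2 (filter_adj_subset_neighborFinset G S v)))
    (by simpa only [Multiset.card_map, card_val] using hS v hv) ?_
  simp only [Multiset.mem_map, mem_val, mem_filter]
  rintro _ ⟨u, ⟨huS, -⟩, rfl⟩
  exact hf u huS

theorem iterates_dominate_coreness (G : SimpleGraph V) (c : ℕ → V → ℕ)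
    (h0 : ∀ v : V, c 0 v = G.degree v)
    (hstep : ∀ t : ℕ, ∀ v : V, c (t + 1) v = hIndex ((G.neighborFinset v).val.map (c t))) :
    ∀ t : ℕ, ∀ v : V, coreness G v ≤ c t v := by
  -- A witness set of minimum degree `k` keeps every iterate `≥ k`: each of its vertices has
  -- `k` neighbours inside it, all carrying values `≥ k`, which forces the H-index up to `k`.
  have core_le : ∀ {k : ℕ} {S : Finset V}, IsCoreSet G k S → ∀ t, ∀ v ∈ S, k ≤ c t v := by
    intro k S hS t
    induction t with
    | zero => exact fun v hv => h0 v ▸ hS.le_degree hv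
    | succ t ih => exact fun v hv => hstep t v ▸ hS.le_hIndex_map ih hv
  intro t v
  obtain ⟨S, hS, hv⟩ := exists_isCoreSet_coreness G v
  exact core_le hS t v hv

end
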